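/- arXiv:2203.15097 — 9 statements merged into one kernel-verified Lean document; each statement's English description precedes it below -/
import Mathlib

section
/- Let V be a finite-dimensional real inner product space, K : V → V a symmetric positive semidefinite linear operator, W₊, W₋ : V → ℝ convex differentiable functions, ε, σ, τ > 0. Suppose uⁿ⁺¹, wⁿ⁺¹ ∈ V satisfy uⁿ⁺¹ + τσ·K wⁿ⁺¹ = uⁿ and ε·K uⁿ⁺¹ + ε⁻¹(∇W₊(uⁿ⁺¹) − ∇W₋(uⁿ)) = wⁿ⁺¹. Then E(uⁿ⁺¹) ≤ E(uⁿ), where E(v) = (ε/2)⟨K v, v⟩ + ε⁻¹(W₊(v) − W₋(v)). -/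
/-!
Pair `wⁿ⁺¹` with the increment `d := uⁿ⁺¹ - uⁿ`. By the first equation,
`⟪wⁿ⁺¹, d⟫ = -τσ ⟪K wⁿ⁺¹, wⁿ⁺¹⟫ ≤ 0`; by the second, the same number is
`ε ⟪K uⁿ⁺¹, d⟫ + ε⁻¹ ⟪∇W₊(uⁿ⁺¹) - ∇W₋(uⁿ), d⟫`, and each term dominates the matching increment of
the energy: the quadratic one because `K` is positive semidefinite, the potential one by the
tangent inequality of convex functions, taken at `uⁿ⁺¹` for the implicit part `W₊` and at `uⁿ` for
the explicit part `W₋`.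
-/

open scoped RealInnerProductSpace

theorem ConvexOn.add_fderiv_sub_le {E : Type*} [NormedAddCommGroup E] [NormedSpace ℝ E]
    {s : Set E} {f : E → ℝ} {f' : E →L[ℝ] ℝ} {x y : E} (hf : ConvexOn ℝ s f)
    (hx : x ∈ s) (hy : y ∈ s) (hf' : HasFDerivAt f f' x) :
    f x + f' (y - x) ≤ f y := by
  set L : ℝ →ᵃ[ℝ] E := AffineMap.lineMap x y
  have hφ : ConvexOn ℝ (L ⁻¹' s) (f ∘ L) := hf.comp_affineMap L
  have hφ' : HasDerivAt (f ∘ L) (f' (y - x)) 0 := by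
    simpa using hf'.comp_hasDerivAt_of_eq (0 : ℝ) AffineMap.hasDerivAt_lineMap (by simp)
  have hslope := hφ.le_slope_of_hasDerivAt (x := 0) (y := 1) (by simpa [L] using hx)
    (by simpa [L] using hy) zero_lt_one hφ'
  simp only [L, slope_def_field, Function.comp_apply, AffineMap.lineMap_apply_zero,
    AffineMap.lineMap_apply_one, sub_zero, div_one] at hslope
  linarith

theorem ConvexOn.add_inner_sub_le_of_hasGradientAt {F : Type*} [NormedAddCommGroup F]
    [InnerProductSpace ℝ F] [CompleteSpace F] {s : Set F} {f : F → ℝ} {g x y : F}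
    (hf : ConvexOn ℝ s f) (hx : x ∈ s) (hy : y ∈ s) (hg : HasGradientAt f g x) :
    f x + ⟪g, y - x⟫ ≤ f y :=
  hf.add_fderiv_sub_le hx hy hg.hasFDerivAt

theorem LinearMap.IsSymmetric.inner_map_self_sub_le {F : Type*} [NormedAddCommGroup F]
    [InnerProductSpace ℝ F] {K : F →ₗ[ℝ] F} (hK : K.IsSymmetric)
    (hKpos : ∀ v, 0 ≤ ⟪K v, v⟫) (u v : F) :
    ⟪K u, u⟫ / 2 - ⟪K v, v⟫ / 2 ≤ ⟪K u, u - v⟫ := by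
  have hcross : ⟪K v, u⟫ = ⟪K u, v⟫ := by rw [hK, real_inner_comm]
  have hsq : ⟪K (u - v), u - v⟫ = ⟪K u, u⟫ - 2 * ⟪K u, v⟫ + ⟪K v, v⟫ := by
    simp only [map_sub, inner_sub_left, inner_sub_right, hcross]
    ring
  have := hKpos (u - v)
  rw [inner_sub_right]
  linarith

theorem convexSplitting_increment_le_inner {F : Type*} [NormedAddCommGroup F]
    [InnerProductSpace ℝ F] [CompleteSpace F] {s : Set F} {Wp Wm : F → ℝ} {gp gm u0 u1 : F}
    (hWp : ConvexOn ℝ s Wp) (hWm : ConvexOn ℝ s Wm) (hu0 : u0 ∈ s) (hu1 : u1 ∈ s)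
    (hgp : HasGradientAt Wp gp u1) (hgm : HasGradientAt Wm gm u0) :
    (Wp u1 - Wm u1) - (Wp u0 - Wm u0) ≤ ⟪gp - gm, u1 - u0⟫ := by
  have hWp_tangent := hWp.add_inner_sub_le_of_hasGradientAt hu1 hu0 hgp
  have hWm_tangent := hWm.add_inner_sub_le_of_hasGradientAt hu0 hu1 hgm
  have hflip : ⟪gp, u0 - u1⟫ = -⟪gp, u1 - u0⟫ := by rw [← inner_neg_right, neg_sub]
  rw [inner_sub_left]
  linarith

theorem stmt_5 {V : Type*} [NormedAddCommGroup V] [InnerProductSpace ℝ V]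
    [FiniteDimensional ℝ V]
    (K : V →ₗ[ℝ] V)
    (hKsym : ∀ x y : V, ⟪K x, y⟫ = ⟪x, K y⟫)
    (hKpos : ∀ v : V, 0 ≤ ⟪K v, v⟫)
    (Wp Wm : V → ℝ) (gWp gWm : V → V)
    (hWpconv : ConvexOn ℝ Set.univ Wp) (hWmconv : ConvexOn ℝ Set.univ Wm)
    (hWp : ∀ x, HasGradientAt Wp (gWp x) x)
    (hWm : ∀ x, HasGradientAt Wm (gWm x) x)
    (ε σ τ : ℝ) (hε : 0 < ε) (hσ : 0 < σ) (hτ : 0 < τ)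
    (E : V → ℝ)
    (hE : ∀ v, E v = (ε/2) * ⟪K v, v⟫ + ε⁻¹ * (Wp v - Wm v))
    (u0 u1 w1 : V)
    (h1 : u1 + (τ * σ) • K w1 = u0)
    (h2 : ε • K u1 + ε⁻¹ • (gWp u1 - gWm u0) = w1) :
    E u1 ≤ E u0 := by
  have hquad := LinearMap.IsSymmetric.inner_map_self_sub_le hKsym hKpos u1 u0
  have hpot := convexSplitting_increment_le_inner hWpconv hWmconv trivial trivial (hWp u1) (hWm u0)
  have htest : ⟪w1, u1 - u0⟫ = ε * ⟪K u1, u1 - u0⟫ + ε⁻¹ * ⟪gWp u1 - gWm u0, u1 - u0⟫ := by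
    rw [← h2, inner_add_left, real_inner_smul_left, real_inner_smul_left]
  have hdiss : ⟪w1, u1 - u0⟫ = -(τ * σ * ⟪K w1, w1⟫) := by
    rw [← h1, sub_add_cancel_left, inner_neg_right, inner_smul_right, real_inner_comm]
  have hdiss_nonpos : ⟪w1, u1 - u0⟫ ≤ 0 := by
    rw [hdiss, neg_nonpos]
    exact mul_nonneg (by positivity) (hKpos w1)
  rw [hE, hE, ← sub_nonpos]
  calc (ε / 2 * ⟪K u1, u1⟫ + ε⁻¹ * (Wp u1 - Wm u1)) - (ε / 2 * ⟪K u0, u0⟫ + ε⁻¹ * (Wp u0 - Wm u0))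
      = ε * (⟪K u1, u1⟫ / 2 - ⟪K u0, u0⟫ / 2)
          + ε⁻¹ * ((Wp u1 - Wm u1) - (Wp u0 - Wm u0)) := by ring
    _ ≤ ε * ⟪K u1, u1 - u0⟫ + ε⁻¹ * ⟪gWp u1 - gWm u0, u1 - u0⟫ := by gcongr
    _ = ⟪w1, u1 - u0⟫ := htest.symm
    _ ≤ 0 := hdiss_nonpos
end

section
/- Let V, P be finite-dimensional real inner product spaces, K_Ω : V → V and K_Γ : P → P symmetric positive semidefinite, B : V → P linear, ε, δ, κ, σ, τ > 0, and W₊, W₋ : V → ℝ, G₊, G₋ : P → ℝ convex differentiable. Suppose uⁿ, uⁿ⁺¹, wⁿ⁺¹ ∈ V, pⁿ, pⁿ⁺¹ ∈ P, λⁿ⁺¹ ∈ P satisfy: (i) uⁿ⁺¹ + τσ K_Ω wⁿ⁺¹ = uⁿ; (ii) ε K_Ω uⁿ⁺¹ + ε⁻¹(∇W₊(uⁿ⁺¹) − ∇W₋(uⁿ)) − ε B*λⁿ⁺¹ = wⁿ⁺¹; (iii) pⁿ⁺¹ + τδκ K_Γ pⁿ⁺¹ + τδ⁻¹(∇G₊(pⁿ⁺¹)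 − ∇G₋(pⁿ)) + τε λⁿ⁺¹ = pⁿ; (iv) B uⁿ = pⁿ and B uⁿ⁺¹ = pⁿ⁺¹. Then E(uⁿ⁺¹, pⁿ⁺¹) ≤ E(uⁿ, pⁿ), where E(u, p) = (ε/2)⟨K_Ω u, u⟩ + ε⁻¹(W₊(u) − W₋(u)) + (δκ/2)⟨K_Γ p, p⟩ + δ⁻¹(G₊(p) − G₋(p)). -/
open scoped RealInnerProductSpace

open InnerProductSpace in
lemma gradIneq_aux {V : Type*} [NormedAddCommGroup V] [InnerProductSpace ℝ V]
    [CompleteSpace V]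
    {f : V → ℝ} {g : V → V} (hconv : ConvexOn ℝ Set.univ f)
    (hg : ∀ x, HasGradientAt f (g x) x) (x y : V) :
    ⟪g x, y - x⟫ ≤ f y - f x := by
  set c : ℝ → V := fun t => x + t • (y - x) with hc
  have hconvc : ConvexOn ℝ Set.univ (f ∘ c) := by
    have h := hconv.comp_affineMap (AffineMap.lineMap x y : ℝ →ᵃ[ℝ] V)
    have heq : (f ∘ (AffineMap.lineMap x y : ℝ →ᵃ[ℝ] V)) = f ∘ c := by
      funext t
      simp only [Function.comp_apply, AffineMap.lineMap_apply, vsub_eq_sub, vadd_eq_add, hc]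
      rw [add_comm]
    rw [heq] at h
    simpa using h
  have hcd : HasDerivAt c (y - x) 0 := by
    have := ((hasDerivAt_id (0:ℝ)).smul_const (y - x)).const_add x
    simpa [hc] using this
  have hfd : HasFDerivAt f (toDual ℝ V (g x)) x := (hg x).hasFDerivAt
  have h0 : c 0 = x := by simp [hc]
  have hfd' : HasFDerivAt f (toDual ℝ V (g x)) (c 0) := h0 ▸ hfd
  have hcomp : HasDerivAt (f ∘ c) (⟪g x, y - x⟫) 0 := by
    have := hfd'.comp_hasDerivAt 0 hcd
    simpa [InnerProductSpace.toDual_apply_apply] using this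
  have hs := hconvc.le_slope_of_hasDerivAt (Set.mem_univ (0:ℝ)) (Set.mem_univ (1:ℝ))
    one_pos hcomp
  have h1 : c 1 = y := by simp [hc]
  rw [slope_def_field] at hs
  simpa [h0, h1] using hs

theorem stmt_8 {V P : Type*} [NormedAddCommGroup V] [InnerProductSpace ℝ V]
    [FiniteDimensional ℝ V] [NormedAddCommGroup P] [InnerProductSpace ℝ P]
    [FiniteDimensional ℝ P]
    (KΩ : V →ₗ[ℝ] V) (KΓ : P →ₗ[ℝ] P) (B : V →ₗ[ℝ] P)
    (hKΩsym : ∀ x y : V, ⟪KΩ x, y⟫ = ⟪x, KΩ y⟫)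
    (hKΩpos : ∀ v : V, 0 ≤ ⟪KΩ v, v⟫)
    (hKΓsym : ∀ x y : P, ⟪KΓ x, y⟫ = ⟪x, KΓ y⟫)
    (hKΓpos : ∀ q : P, 0 ≤ ⟪KΓ q, q⟫)
    (ε δ κ σ τ : ℝ) (hε : 0 < ε) (hδ : 0 < δ) (hκ : 0 < κ) (hσ : 0 < σ) (hτ : 0 < τ)
    (Wp Wm : V → ℝ) (gWp gWm : V → V)
    (Gp Gm : P → ℝ) (gGp gGm : P → P)
    (hWpconv : ConvexOn ℝ Set.univ Wp) (hWmconv : ConvexOn ℝ Set.univ Wm)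
    (hGpconv : ConvexOn ℝ Set.univ Gp) (hGmconv : ConvexOn ℝ Set.univ Gm)
    (hWp : ∀ x, HasGradientAt Wp (gWp x) x)
    (hWm : ∀ x, HasGradientAt Wm (gWm x) x)
    (hGp : ∀ x, HasGradientAt Gp (gGp x) x)
    (hGm : ∀ x, HasGradientAt Gm (gGm x) x)
    (E : V → P → ℝ)
    (hE : ∀ u p, E u p = (ε/2) * ⟪KΩ u, u⟫ + ε⁻¹ * (Wp u - Wm u)
      + (δ * κ / 2) * ⟪KΓ p, p⟫ + δ⁻¹ * (Gp p - Gm p))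
    (u0 u1 w1 : V) (p0 p1 lam : P)
    (h1 : u1 + (τ * σ) • KΩ w1 = u0)
    (h2 : ε • KΩ u1 + ε⁻¹ • (gWp u1 - gWm u0) - ε • (LinearMap.adjoint B) lam = w1)
    (h3 : p1 + (τ * δ * κ) • KΓ p1 + (τ * δ⁻¹) • (gGp p1 - gGm p0) + (τ * ε) • lam = p0)
    (h4 : B u0 = p0) (h5 : B u1 = p1) :
    E u1 p1 ≤ E u0 p0 := by
  -- abbreviations
  set X : ℝ := ⟪KΩ u1, u1 - u0⟫ with hX
  set Y : ℝ := ⟪gWp u1 - gWm u0, u1 - u0⟫ with hY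
  set Z : ℝ := ⟪KΓ p1, p1 - p0⟫ with hZ
  set G : ℝ := ⟪gGp p1 - gGm p0, p1 - p0⟫ with hG
  set L : ℝ := ⟪lam, p1 - p0⟫ with hL
  set N : ℝ := ⟪p1 - p0, p1 - p0⟫ with hN
  set KW : ℝ := ⟪KΩ w1, w1⟫ with hKW
  -- step A : testing (i) with w1
  have e1 : u1 - u0 = -((τ * σ) • KΩ w1) := by rw [← h1]; abel
  have a1 : ⟪u1 - u0, w1⟫ = -(τ * σ) * KW := by
    rw [e1, inner_neg_left, real_inner_smul_left, hKW]; ring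
  -- step B : testing (ii) with u1 - u0
  have a2 : ⟪w1, u1 - u0⟫ = ε * X + ε⁻¹ * Y - ε * L := by
    rw [hX, hY, hL, ← h2]
    have hadj : ⟪(LinearMap.adjoint B) lam, u1 - u0⟫ = ⟪lam, p1 - p0⟫ := by
      rw [LinearMap.adjoint_inner_left, map_sub, h4, h5]
    simp only [inner_sub_left, inner_add_left, real_inner_smul_left, hadj]
    try ring
  have eq1 : ε * X + ε⁻¹ * Y - ε * L = -(τ * σ) * KW := by
    rw [← a2, real_inner_comm]; exact a1
  -- step C : testing (iii) with p1 - p0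
  have e3 : p0 - p1 = (τ * δ * κ) • KΓ p1 + (τ * δ⁻¹) • (gGp p1 - gGm p0)
      + (τ * ε) • lam := by
    conv_lhs => rw [← h3]
    abel
  have a3 : ⟪p0 - p1, p1 - p0⟫ = (τ * δ * κ) * Z + (τ * δ⁻¹) * G + (τ * ε) * L := by
    rw [e3, hZ, hG, hL]
    simp only [inner_add_left, real_inner_smul_left]
  have eq2 : ⟪p0 - p1, p1 - p0⟫ = -N := by
    rw [show p0 - p1 = -(p1 - p0) from by abel, inner_neg_left, hN]
  have eq3 : (τ * δ * κ) * Z + (τ * δ⁻¹) * G + (τ * ε) * L = -N := by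
    rw [← a3]; exact eq2
  -- combine
  have hKWpos : (0:ℝ) ≤ KW := hKΩpos w1
  have hNpos : (0:ℝ) ≤ N := real_inner_self_nonneg
  have teq1 : τ * (ε * X + ε⁻¹ * Y - ε * L) = τ * (-(τ * σ) * KW) := by rw [eq1]
  have hKWτ : (0:ℝ) ≤ τ * τ * σ * KW := mul_nonneg (by positivity) hKWpos
  have hτS : τ * (ε * X + ε⁻¹ * Y + δ * κ * Z + δ⁻¹ * G) ≤ τ * 0 := by
    rw [mul_zero]; nlinarith [teq1, eq3, hKWτ, hNpos]
  have hS : ε * X + ε⁻¹ * Y + δ * κ * Z + δ⁻¹ * G ≤ 0 := le_of_mul_le_mul_left hτS hτ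
  -- quadratic bounds
  have qΩ : (⟪KΩ u1, u1⟫ - ⟪KΩ u0, u0⟫) / 2 ≤ X := by
    have hp := hKΩpos (u1 - u0)
    have hsym : ⟪KΩ u0, u1⟫ = ⟪KΩ u1, u0⟫ := by
      rw [hKΩsym u0 u1]; exact real_inner_comm (KΩ u1) u0
    rw [hX]
    simp only [map_sub, inner_sub_left, inner_sub_right] at hp ⊢
    linarith
  have qΓ : (⟪KΓ p1, p1⟫ - ⟪KΓ p0, p0⟫) / 2 ≤ Z := by
    have hp := hKΓpos (p1 - p0)
    have hsym : ⟪KΓ p0, p1⟫ = ⟪KΓ p1, p0⟫ := by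
      rw [hKΓsym p0 p1]; exact real_inner_comm (KΓ p1) p0
    rw [hZ]
    simp only [map_sub, inner_sub_left, inner_sub_right] at hp ⊢
    linarith
  -- convexity bounds
  have cW : (Wp u1 - Wm u1) - (Wp u0 - Wm u0) ≤ Y := by
    have c1 := gradIneq_aux hWpconv hWp u1 u0
    have c2 := gradIneq_aux hWmconv hWm u0 u1
    rw [hY]
    simp only [inner_sub_left, inner_sub_right] at c1 c2 ⊢
    linarith
  have cG : (Gp p1 - Gm p1) - (Gp p0 - Gm p0) ≤ G := by
    have c1 := gradIneq_aux hGpconv hGp p1 p0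
    have c2 := gradIneq_aux hGmconv hGm p0 p1
    rw [hG]
    simp only [inner_sub_left, inner_sub_right] at c1 c2 ⊢
    linarith
  -- scale the bounds
  have i1 := mul_le_mul_of_nonneg_left qΩ hε.le
  have i2 := mul_le_mul_of_nonneg_left cW (inv_nonneg.mpr hε.le)
  have i3 := mul_le_mul_of_nonneg_left qΓ (mul_nonneg hδ.le hκ.le)
  have i4 := mul_le_mul_of_nonneg_left cG (inv_nonneg.mpr hδ.le)
  rw [hE u1 p1, hE u0 p0]
  linarith [i1, i2, i3, i4, hS]
end

section
/- Let V, P be finite-dimensional real inner product spaces, K_Ω : V → V and K_Γ : P → P symmetric positive semidefinite, B : V → P linear, ε, δ, κ, σ, τ > 0, and W₊, W₋ : V → ℝ, G₊, G₋ : P → ℝ convex differentiable. Suppose uⁿ, uⁿ⁺¹, wⁿ⁺¹ ∈ V, pⁿ, pⁿ⁺¹, w_Γⁿ⁺¹, λⁿ⁺¹ ∈ P satisfy: (i) uⁿ⁺¹ + τσ K_Ω wⁿ⁺¹ = uⁿ; (ii) ε K_Ω uⁿ⁺¹ + ε⁻¹(∇W₊(uⁿ⁺¹) − ∇W₋(uⁿ))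 − ε B*λⁿ⁺¹ = wⁿ⁺¹; (iii) pⁿ⁺¹ + τ K_Γ w_Γⁿ⁺¹ = pⁿ; (iv) δκ K_Γ pⁿ⁺¹ + δ⁻¹(∇G₊(pⁿ⁺¹) − ∇G₋(pⁿ)) + ε λⁿ⁺¹ = w_Γⁿ⁺¹; (v) B uⁿ = pⁿ and B uⁿ⁺¹ = pⁿ⁺¹. Then the total energy E(u,p) = (ε/2)⟨K_Ω u, u⟩ + ε⁻¹(W₊(u) − W₋(u)) + (δκ/2)⟨K_Γ p, p⟩ + δ⁻¹(G₊(p) − G₋(p)) satisfies E(uⁿ⁺¹, pⁿ⁺¹) ≤ E(uⁿ, pⁿ). -/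
open scoped RealInnerProductSpace

/-!
Test the chemical-potential equations (ii), (iv) against the increments `u¹ - u⁰` and
`p¹ - p⁰ = B (u¹ - u⁰)`: the Lagrange multiplier terms cancel, and the mobility equations (i), (iii)
make the sum `⟪w¹, u¹ - u⁰⟫ + ⟪w_Γ¹, p¹ - p⁰⟫` nonpositive. Each energy increment is bounded by
the corresponding tested term: the quadratic parts because `K` is positive
(`½⟪K y, y⟫ - ½⟪K x, x⟫ = ⟪K y, y - x⟫ - ½⟪K (y - x), y - x⟫`), and the potentials because the
convex part is treated implicitly and the concave part explicitly, so both gradient inequalities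
point the right way.
-/

section

variable {E : Type*} [NormedAddCommGroup E] [InnerProductSpace ℝ E]

theorem ConvexOn.inner_le_sub_of_hasGradientAt [CompleteSpace E] {s : Set E} {f : E → ℝ}
    {g x y : E} (hf : ConvexOn ℝ s f) (hx : x ∈ s) (hy : y ∈ s) (hg : HasGradientAt f g x) :
    ⟪g, y - x⟫ ≤ f y - f x := by
  let ℓ : ℝ →ᵃ[ℝ] E := AffineMap.lineMap x y
  have hmaps : Set.MapsTo ℓ (Set.Icc 0 1) s := by
    simpa only [ℓ, Set.mapsTo_iff_image_subset, ← segment_eq_image_lineMap]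
      using hf.1.segment_subset hx hy
  have hconv : ConvexOn ℝ (Set.Icc 0 1) (f ∘ ℓ) :=
    (hf.comp_affineMap ℓ).subset hmaps (convex_Icc 0 1)
  have hderiv : HasDerivAt (f ∘ ℓ) ⟪g, y - x⟫ 0 := by
    have hline : HasDerivAt ℓ (y - x) 0 := AffineMap.hasDerivAt_lineMap
    have hf' : HasFDerivAt f (InnerProductSpace.toDual ℝ E g) (ℓ 0) := by
      simpa [ℓ] using hg.hasFDerivAt
    simpa using hf'.comp_hasDerivAt (0 : ℝ) hline
  have hslope := hconv.le_slope_of_hasDerivAt (by simp) (by simp) zero_lt_one hderiv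
  simpa [slope_def_field, ℓ] using hslope

theorem ConvexOn.sub_sub_sub_le_inner_of_hasGradientAt [CompleteSpace E] {s : Set E}
    {f g : E → ℝ} {f' g' x y : E} (hf : ConvexOn ℝ s f) (hg : ConvexOn ℝ s g)
    (hx : x ∈ s) (hy : y ∈ s) (hfy : HasGradientAt f f' y) (hgx : HasGradientAt g g' x) :
    (f y - g y) - (f x - g x) ≤ ⟪f' - g', y - x⟫ := by
  have hf_le := hf.inner_le_sub_of_hasGradientAt hy hx hfy
  have hg_le := hg.inner_le_sub_of_hasGradientAt hx hy hgx
  rw [← neg_sub y x, inner_neg_right] at hf_le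
  rw [inner_sub_left]
  linarith

namespace LinearMap.IsPositive

variable {K : E →ₗ[ℝ] E}

theorem half_inner_sub_half_inner_le (hK : K.IsPositive) (x y : E) :
    ⟪K y, y⟫ / 2 - ⟪K x, x⟫ / 2 ≤ ⟪K y, y - x⟫ := by
  have hsymm : ⟪K x, y⟫ = ⟪K y, x⟫ := by rw [hK.isSymmetric, real_inner_comm]
  have hsq := hK.inner_nonneg_left (y - x)
  simp only [map_sub, inner_sub_left, inner_sub_right] at hsq ⊢
  linarith

theorem inner_sub_nonpos_of_add_smul_eq (hK : K.IsPositive) {c : ℝ} (hc : 0 ≤ c)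
    {w x y : E} (h : y + c • K w = x) : ⟪w, y - x⟫ ≤ 0 := by
  rw [← h, sub_add_cancel_left, inner_neg_right, inner_smul_right, real_inner_comm]
  exact neg_nonpos.mpr (mul_nonneg hc (hK.inner_nonneg_left w))

end LinearMap.IsPositive

end

theorem stmt_9 {V P : Type*} [NormedAddCommGroup V] [InnerProductSpace ℝ V]
    [FiniteDimensional ℝ V] [NormedAddCommGroup P] [InnerProductSpace ℝ P]
    [FiniteDimensional ℝ P]
    (KΩ : V →ₗ[ℝ] V) (KΓ : P →ₗ[ℝ] P) (B : V →ₗ[ℝ] P)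
    (hKΩsym : ∀ x y : V, ⟪KΩ x, y⟫ = ⟪x, KΩ y⟫)
    (hKΩpos : ∀ v : V, 0 ≤ ⟪KΩ v, v⟫)
    (hKΓsym : ∀ x y : P, ⟪KΓ x, y⟫ = ⟪x, KΓ y⟫)
    (hKΓpos : ∀ q : P, 0 ≤ ⟪KΓ q, q⟫)
    (ε δ κ σ τ : ℝ) (hε : 0 < ε) (hδ : 0 < δ) (hκ : 0 < κ) (hσ : 0 < σ) (hτ : 0 < τ)
    (Wp Wm : V → ℝ) (gWp gWm : V → V)
    (Gp Gm : P → ℝ) (gGp gGm : P → P)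
    (hWpconv : ConvexOn ℝ Set.univ Wp) (hWmconv : ConvexOn ℝ Set.univ Wm)
    (hGpconv : ConvexOn ℝ Set.univ Gp) (hGmconv : ConvexOn ℝ Set.univ Gm)
    (hWp : ∀ x, HasGradientAt Wp (gWp x) x)
    (hWm : ∀ x, HasGradientAt Wm (gWm x) x)
    (hGp : ∀ x, HasGradientAt Gp (gGp x) x)
    (hGm : ∀ x, HasGradientAt Gm (gGm x) x)
    (E : V → P → ℝ)
    (hE : ∀ u p, E u p = (ε/2) * ⟪KΩ u, u⟫ + ε⁻¹ * (Wp u - Wm u)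
      + (δ * κ / 2) * ⟪KΓ p, p⟫ + δ⁻¹ * (Gp p - Gm p))
    (u0 u1 w1 : V) (p0 p1 wΓ1 lam : P)
    (h1 : u1 + (τ * σ) • KΩ w1 = u0)
    (h2 : ε • KΩ u1 + ε⁻¹ • (gWp u1 - gWm u0) - ε • (LinearMap.adjoint B) lam = w1)
    (h3 : p1 + τ • KΓ wΓ1 = p0)
    (h4 : (δ * κ) • KΓ p1 + δ⁻¹ • (gGp p1 - gGm p0) + ε • lam = wΓ1)
    (h5 : B u0 = p0) (h6 : B u1 = p1) :
    E u1 p1 ≤ E u0 p0 := by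
  have hKΩ : KΩ.IsPositive := ⟨hKΩsym, hKΩpos⟩
  have hKΓ : KΓ.IsPositive := ⟨hKΓsym, hKΓpos⟩
  have hflowΩ := hKΩ.inner_sub_nonpos_of_add_smul_eq (mul_pos hτ hσ).le h1
  have hflowΓ := hKΓ.inner_sub_nonpos_of_add_smul_eq hτ.le h3
  have hbalance : ⟪w1, u1 - u0⟫ + ⟪wΓ1, p1 - p0⟫ = ε * ⟪KΩ u1, u1 - u0⟫
      + ε⁻¹ * ⟪gWp u1 - gWm u0, u1 - u0⟫ + δ * κ * ⟪KΓ p1, p1 - p0⟫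
      + δ⁻¹ * ⟪gGp p1 - gGm p0, p1 - p0⟫ := by
    rw [← h2, ← h4]
    simp only [inner_sub_left, inner_add_left, real_inner_smul_left,
      LinearMap.adjoint_inner_left, map_sub, h5, h6]
    ring
  have hquadΩ := mul_le_mul_of_nonneg_left (hKΩ.half_inner_sub_half_inner_le u0 u1) hε.le
  have hquadΓ := mul_le_mul_of_nonneg_left (hKΓ.half_inner_sub_half_inner_le p0 p1)
    (mul_pos hδ hκ).le
  have hW := mul_le_mul_of_nonneg_left (hWpconv.sub_sub_sub_le_inner_of_hasGradientAt hWmconv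
    (Set.mem_univ u0) (Set.mem_univ u1) (hWp u1) (hWm u0)) (inv_pos.mpr hε).le
  have hG := mul_le_mul_of_nonneg_left (hGpconv.sub_sub_sub_le_inner_of_hasGradientAt hGmconv
    (Set.mem_univ p0) (Set.mem_univ p1) (hGp p1) (hGm p0)) (inv_pos.mpr hδ).le
  rw [hE, hE]
  linarith
end

section
/- Let ε, σ, τ > 0, let K : ℝ^d → ℝ^d be symmetric positive semidefinite with respect to the standard inner product ⟨·,·⟩ on ℝ^d, and consider on ℝ^d with componentwise operations the potential W(v) = Σᵢ (1/4)(vᵢ² − 1)². Suppose u⁰, u¹, w⁰, w¹ ∈ ℝ^d satisfy u¹ + τσ K ((w⁰+w¹)/2) = u⁰ and ε K ((u⁰+u¹)/2) + ε⁻¹ D(u⁰,u¹) = (w⁰+w¹)/2, where D(u⁰,u¹)ᵢ = ((u¹ᵢ² + u⁰ᵢ²)/2 − 1)·(u¹ᵢ + u⁰ᵢ)/2. Then (ε/2)⟨K u¹, u¹⟩ + ε⁻¹ W(u¹) ≤ (ε/2)⟨K u⁰, u⁰⟩ + ε⁻¹ W(u⁰). -/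
open scoped RealInnerProductSpace

theorem stmt_11 {d : ℕ}
    (K : EuclideanSpace ℝ (Fin d) →ₗ[ℝ] EuclideanSpace ℝ (Fin d))
    (hKsym : ∀ x y, ⟪K x, y⟫ = ⟪x, K y⟫)
    (hKpos : ∀ v, 0 ≤ ⟪K v, v⟫)
    (ε σ τ : ℝ) (hε : 0 < ε) (hσ : 0 < σ) (hτ : 0 < τ)
    (W : EuclideanSpace ℝ (Fin d) → ℝ)
    (hW : ∀ v, W v = ∑ i, (1/4) * ((v i)^2 - 1)^2)
    (D : EuclideanSpace ℝ (Fin d) → EuclideanSpace ℝ (Fin d) → EuclideanSpace ℝ (Fin d))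
    (hD : ∀ a b i, D a b i = (((b i)^2 + (a i)^2)/2 - 1) * ((b i + a i)/2))
    (u0 u1 w0 w1 : EuclideanSpace ℝ (Fin d))
    (h1 : u1 + (τ * σ) • K ((1/2 : ℝ) • (w0 + w1)) = u0)
    (h2 : ε • K ((1/2 : ℝ) • (u0 + u1)) + ε⁻¹ • D u0 u1 = (1/2 : ℝ) • (w0 + w1)) :
    (ε/2) * ⟪K u1, u1⟫ + ε⁻¹ * W u1 ≤ (ε/2) * ⟪K u0, u0⟫ + ε⁻¹ * W u0 := by
  set μ : EuclideanSpace ℝ (Fin d) := (1/2 : ℝ) • (w0 + w1) with hμ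
  have hdiff : u1 - u0 = -((τ * σ) • K μ) := by
    rw [← h1]; abel
  -- inner product of h2 with u1 - u0
  have key : ε * ⟪K ((1/2 : ℝ) • (u0 + u1)), u1 - u0⟫ + ε⁻¹ * ⟪D u0 u1, u1 - u0⟫
      = ⟪μ, u1 - u0⟫ := by
    rw [← h2]
    simp [inner_add_left, inner_smul_left, PiLp.inner_apply]
    ring
  have hrhs : ⟪μ, u1 - u0⟫ ≤ 0 := by
    rw [hdiff, inner_neg_right, inner_smul_right, real_inner_comm]
    nlinarith [mul_pos hτ hσ, hKpos μ]
  -- first term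
  have hKterm : ⟪K ((1/2 : ℝ) • (u0 + u1)), u1 - u0⟫
      = (1/2) * (⟪K u1, u1⟫ - ⟪K u0, u0⟫) := by
    have hsym : ⟪K u0, u1⟫ = ⟪K u1, u0⟫ := by
      rw [hKsym u0 u1, real_inner_comm]
    simp only [map_smul, map_add, inner_smul_left, inner_sub_right, inner_add_left,
      RCLike.star_def, conj_trivial]
    ring_nf
    linarith [hsym]
  -- second term
  have hDterm : ⟪D u0 u1, u1 - u0⟫ = W u1 - W u0 := by
    rw [hW, hW, ← Finset.sum_sub_distrib]
    rw [PiLp.inner_apply]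
    apply Finset.sum_congr rfl
    intro i _
    have : (u1 - u0) i = u1 i - u0 i := rfl
    rw [hD, RCLike.inner_apply, conj_trivial, this]
    ring
  rw [hKterm, hDterm] at key
  have hε' : (0:ℝ) < ε⁻¹ := by positivity
  nlinarith [key, hrhs]
end

section
/- Let V, P be finite-dimensional real inner product spaces with V = ℝ^m, P = ℝ^k (componentwise operations), K_Ω and K_Γ symmetric positive semidefinite, B : V → P linear, ε, δ, κ, σ, τ > 0. Write uⁿ⁺¹ᐟ² = (uⁿ+uⁿ⁺¹)/2 etc., and let D(a,b)ᵢ = ((aᵢ²+bᵢ²)/2 − 1)(aᵢ+bᵢ)/2. Suppose: (i) uⁿ⁺¹ + τσ K_Ω wⁿ⁺¹ᐟ² = uⁿ; (ii) ε K_Ω uⁿ⁺¹ᐟ² + ε⁻¹ D(uⁿ,uⁿ⁺¹) − ε B*λ = wⁿ⁺¹ᐟ²; (iii) pⁿ⁺¹ + τδκ K_Γ pⁿ⁺¹ᐟ² + τδ⁻¹ D(pⁿ,pⁿ⁺¹) + τε λ = pⁿ; (iv) B uⁿ = pⁿ and B uⁿ⁺¹ = pⁿ⁺¹. Then E(uⁿ⁺¹,pⁿ⁺¹)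 ≤ E(uⁿ,pⁿ) where E(u,p) = (ε/2)⟨K_Ω u,u⟩ + ε⁻¹ Σᵢ(1/4)(uᵢ²−1)² + (δκ/2)⟨K_Γ p,p⟩ + δ⁻¹ Σᵢ(1/4)(pᵢ²−1)². -/
open scoped RealInnerProductSpace

set_option maxHeartbeats 1000000 in
theorem stmt_13 {m k : ℕ}
    (KΩ : EuclideanSpace ℝ (Fin m) →ₗ[ℝ] EuclideanSpace ℝ (Fin m))
    (KΓ : EuclideanSpace ℝ (Fin k) →ₗ[ℝ] EuclideanSpace ℝ (Fin k))
    (B : EuclideanSpace ℝ (Fin m) →ₗ[ℝ] EuclideanSpace ℝ (Fin k))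
    (hKΩsym : ∀ x y, ⟪KΩ x, y⟫ = ⟪x, KΩ y⟫)
    (hKΩpos : ∀ v, 0 ≤ ⟪KΩ v, v⟫)
    (hKΓsym : ∀ x y, ⟪KΓ x, y⟫ = ⟪x, KΓ y⟫)
    (hKΓpos : ∀ q, 0 ≤ ⟪KΓ q, q⟫)
    (ε δ κ σ τ : ℝ) (hε : 0 < ε) (hδ : 0 < δ) (hκ : 0 < κ) (hσ : 0 < σ) (hτ : 0 < τ)
    (DV : EuclideanSpace ℝ (Fin m) → EuclideanSpace ℝ (Fin m) → EuclideanSpace ℝ (Fin m))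
    (hDV : ∀ a b i, DV a b i = (((a i)^2 + (b i)^2)/2 - 1) * ((a i + b i)/2))
    (DP : EuclideanSpace ℝ (Fin k) → EuclideanSpace ℝ (Fin k) → EuclideanSpace ℝ (Fin k))
    (hDP : ∀ a b i, DP a b i = (((a i)^2 + (b i)^2)/2 - 1) * ((a i + b i)/2))
    (E : EuclideanSpace ℝ (Fin m) → EuclideanSpace ℝ (Fin k) → ℝ)
    (hE : ∀ u p, E u p = (ε/2) * ⟪KΩ u, u⟫ + ε⁻¹ * (∑ i, (1/4) * ((u i)^2 - 1)^2)
      + (δ * κ / 2) * ⟪KΓ p, p⟫ + δ⁻¹ * (∑ i, (1/4) * ((p i)^2 - 1)^2))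
    (u0 u1 w12 : EuclideanSpace ℝ (Fin m)) (p0 p1 lam : EuclideanSpace ℝ (Fin k))
    (h1 : u1 + (τ * σ) • KΩ w12 = u0)
    (h2 : ε • KΩ ((1/2 : ℝ) • (u0 + u1)) + ε⁻¹ • DV u0 u1
      - ε • (LinearMap.adjoint B) lam = w12)
    (h3 : p1 + (τ * δ * κ) • KΓ ((1/2 : ℝ) • (p0 + p1)) + (τ * δ⁻¹) • DP p0 p1
      + (τ * ε) • lam = p0)
    (h4 : B u0 = p0) (h5 : B u1 = p1) :
    E u1 p1 ≤ E u0 p0 := by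
  set uh : EuclideanSpace ℝ (Fin m) := (1/2 : ℝ) • (u0 + u1) with huh
  set ph : EuclideanSpace ℝ (Fin k) := (1/2 : ℝ) • (p0 + p1) with hph
  set d : EuclideanSpace ℝ (Fin m) := u1 - u0 with hd
  set e : EuclideanSpace ℝ (Fin k) := p1 - p0 with he
  have hcΩ : ⟪KΩ u0, u1⟫ = ⟪KΩ u1, u0⟫ := by
    rw [hKΩsym u0 u1, real_inner_comm]
  have quadΩ : ⟪KΩ u1, u1⟫ - ⟪KΩ u0, u0⟫ = 2 * ⟪KΩ uh, d⟫ := by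
    have expand : ⟪KΩ uh, d⟫ = (1/2) * (⟪KΩ u0, u1⟫ - ⟪KΩ u0, u0⟫
        + ⟪KΩ u1, u1⟫ - ⟪KΩ u1, u0⟫) := by
      simp only [huh, hd, map_smul, map_add, real_inner_smul_left, inner_add_left,
        inner_sub_right]
      ring
    rw [expand]; linarith [hcΩ]
  have hcΓ : ⟪KΓ p0, p1⟫ = ⟪KΓ p1, p0⟫ := by
    rw [hKΓsym p0 p1, real_inner_comm]
  have quadΓ : ⟪KΓ p1, p1⟫ - ⟪KΓ p0, p0⟫ = 2 * ⟪KΓ ph, e⟫ := by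
    have expand : ⟪KΓ ph, e⟫ = (1/2) * (⟪KΓ p0, p1⟫ - ⟪KΓ p0, p0⟫
        + ⟪KΓ p1, p1⟫ - ⟪KΓ p1, p0⟫) := by
      simp only [hph, he, map_smul, map_add, real_inner_smul_left, inner_add_left,
        inner_sub_right]
      ring
    rw [expand]; linarith [hcΓ]
  have quartV : (∑ i, (1/4) * ((u1 i)^2 - 1)^2) - (∑ i, (1/4) * ((u0 i)^2 - 1)^2)
      = ⟪DV u0 u1, d⟫ := by
    rw [PiLp.inner_apply, ← Finset.sum_sub_distrib]
    refine Finset.sum_congr rfl fun i _ => ?_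
    simp only [hDV, hd, PiLp.sub_apply, RCLike.inner_apply, conj_trivial]
    ring
  have quartP : (∑ i, (1/4) * ((p1 i)^2 - 1)^2) - (∑ i, (1/4) * ((p0 i)^2 - 1)^2)
      = ⟪DP p0 p1, e⟫ := by
    rw [PiLp.inner_apply, ← Finset.sum_sub_distrib]
    refine Finset.sum_congr rfl fun i _ => ?_
    simp only [hDP, he, PiLp.sub_apply, RCLike.inner_apply, conj_trivial]
    ring
  have hBd : B d = e := by simp [hd, he, map_sub, h4, h5]
  have hadj : ⟪(LinearMap.adjoint B) lam, d⟫ = ⟪lam, e⟫ := by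
    rw [LinearMap.adjoint_inner_left, hBd]
  have step2 : ε * ⟪KΩ uh, d⟫ + ε⁻¹ * ⟪DV u0 u1, d⟫
      = ⟪w12, d⟫ + ε * ⟪lam, e⟫ := by
    have h := congrArg (fun z => ⟪z, d⟫) h2
    simp only [inner_sub_left, inner_add_left, real_inner_smul_left] at h
    rw [hadj] at h
    linarith
  have hdw : d = (-(τ * σ)) • KΩ w12 := by
    rw [hd, ← h1, neg_smul]; abel
  have step1 : ⟪w12, d⟫ = -(τ * σ) * ⟪KΩ w12, w12⟫ := by
    rw [hdw, real_inner_smul_right, real_inner_comm]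
  have hsub : (⟪e, e⟫ : ℝ) = ⟪p1, e⟫ - ⟪p0, e⟫ := by
    rw [he, inner_sub_left]
  have step3 : (τ * δ * κ) * ⟪KΓ ph, e⟫ + (τ * δ⁻¹) * ⟪DP p0 p1, e⟫
      + (τ * ε) * ⟪lam, e⟫ = -⟪e, e⟫ := by
    have h := congrArg (fun z => ⟪z, e⟫) h3
    simp only [inner_add_left, real_inner_smul_left] at h
    linarith
  have key : τ * (E u1 p1 - E u0 p0)
      = -(τ * (τ * σ)) * ⟪KΩ w12, w12⟫ - ⟪e, e⟫ := by
    rw [hE, hE]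
    linear_combination (τ*ε/2) * quadΩ + (τ*ε⁻¹) * quartV + (τ*δ*κ/2) * quadΓ
      + (τ*δ⁻¹) * quartP + τ * step2 + τ * step1 + step3
  have hww : 0 ≤ ⟪KΩ w12, w12⟫ := hKΩpos w12
  have hee : 0 ≤ ⟪e, e⟫ := real_inner_self_nonneg
  have h6 : 0 ≤ (τ * (τ * σ)) * ⟪KΩ w12, w12⟫ := mul_nonneg (by positivity) hww
  have hle : τ * (E u1 p1 - E u0 p0) ≤ 0 := by rw [key]; linarith
  by_contra hcon
  push_neg at hcon
  nlinarith [mul_pos hτ (sub_pos.mpr hcon)]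
end

section
/- Let V, P be finite-dimensional real inner product spaces (V = ℝ^m, P = ℝ^k), K_Ω, K_Γ symmetric positive semidefinite, B : V → P linear, ε, δ, κ, σ, τ > 0, D(a,b)ᵢ = ((aᵢ²+bᵢ²)/2 − 1)(aᵢ+bᵢ)/2. Suppose uⁿ, uⁿ⁺¹, wⁿ, wⁿ⁺¹ ∈ V, pⁿ, pⁿ⁺¹, w_Γⁿ, w_Γⁿ⁺¹, λ ∈ P satisfy (with mid-point averages x^{n+1/2} = (xⁿ+xⁿ⁺¹)/2): (i) uⁿ⁺¹ + τσ K_Ω w^{n+1/2} = uⁿ; (ii) ε K_Ω u^{n+1/2} + ε⁻¹ D(uⁿ,uⁿ⁺¹) − ε B*λ = w^{n+1/2}; (iii) pⁿ⁺¹ + τ K_Γ w_Γ^{n+1/2} = pⁿ; (iv) δκ K_Γ p^{n+1/2} + δ⁻¹ D(pⁿ,pⁿ⁺¹) + ε λ = w_Γ^{n+1/2}; (v) B uⁿ = pⁿ, B uⁿ⁺¹ = pⁿ⁺¹. Then E(uⁿ⁺¹,pⁿ⁺¹) ≤ E(uⁿ,pⁿ) for E(u,p) = (ε/2)⟨K_Ω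 u,u⟩ + ε⁻¹ Σᵢ(1/4)(uᵢ²−1)² + (δκ/2)⟨K_Γ p,p⟩ + δ⁻¹ Σᵢ(1/4)(pᵢ²−1)². -/
open scoped RealInnerProductSpace

lemma quad_diff {n : ℕ} (K : EuclideanSpace ℝ (Fin n) →ₗ[ℝ] EuclideanSpace ℝ (Fin n))
    (hsym : ∀ x y, ⟪K x, y⟫ = ⟪x, K y⟫) (a b : EuclideanSpace ℝ (Fin n)) :
    ⟪K b, b⟫ - ⟪K a, a⟫ = 2 * ⟪K ((1/2 : ℝ) • (a + b)), b - a⟫ := by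
  have hab : ⟪K a, b⟫ = ⟪K b, a⟫ := by rw [hsym, real_inner_comm]
  simp only [map_smul, map_add, real_inner_smul_left, inner_add_left, inner_sub_right]
  linarith

lemma quart_diff {n : ℕ} (D : EuclideanSpace ℝ (Fin n) → EuclideanSpace ℝ (Fin n) → EuclideanSpace ℝ (Fin n))
    (hD : ∀ a b i, D a b i = (((a i)^2 + (b i)^2)/2 - 1) * ((a i + b i)/2))
    (a b : EuclideanSpace ℝ (Fin n)) :
    (∑ i, (1/4 : ℝ) * ((b i)^2 - 1)^2) - (∑ i, (1/4 : ℝ) * ((a i)^2 - 1)^2)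
      = ⟪D a b, b - a⟫ := by
  rw [← Finset.sum_sub_distrib, PiLp.inner_apply]
  refine Finset.sum_congr rfl fun i _ => ?_
  simp only [RCLike.inner_apply, starRingEnd_apply, star_trivial, hD, PiLp.sub_apply]
  ring

theorem stmt_14 {m k : ℕ}
    (KΩ : EuclideanSpace ℝ (Fin m) →ₗ[ℝ] EuclideanSpace ℝ (Fin m))
    (KΓ : EuclideanSpace ℝ (Fin k) →ₗ[ℝ] EuclideanSpace ℝ (Fin k))
    (B : EuclideanSpace ℝ (Fin m) →ₗ[ℝ] EuclideanSpace ℝ (Fin k))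
    (hKΩsym : ∀ x y, ⟪KΩ x, y⟫ = ⟪x, KΩ y⟫)
    (hKΩpos : ∀ v, 0 ≤ ⟪KΩ v, v⟫)
    (hKΓsym : ∀ x y, ⟪KΓ x, y⟫ = ⟪x, KΓ y⟫)
    (hKΓpos : ∀ q, 0 ≤ ⟪KΓ q, q⟫)
    (ε δ κ σ τ : ℝ) (hε : 0 < ε) (hδ : 0 < δ) (hκ : 0 < κ) (hσ : 0 < σ) (hτ : 0 < τ)
    (DV : EuclideanSpace ℝ (Fin m) → EuclideanSpace ℝ (Fin m) → EuclideanSpace ℝ (Fin m))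
    (hDV : ∀ a b i, DV a b i = (((a i)^2 + (b i)^2)/2 - 1) * ((a i + b i)/2))
    (DP : EuclideanSpace ℝ (Fin k) → EuclideanSpace ℝ (Fin k) → EuclideanSpace ℝ (Fin k))
    (hDP : ∀ a b i, DP a b i = (((a i)^2 + (b i)^2)/2 - 1) * ((a i + b i)/2))
    (E : EuclideanSpace ℝ (Fin m) → EuclideanSpace ℝ (Fin k) → ℝ)
    (hE : ∀ u p, E u p = (ε/2) * ⟪KΩ u, u⟫ + ε⁻¹ * (∑ i, (1/4) * ((u i)^2 - 1)^2)
      + (δ * κ / 2) * ⟪KΓ p, p⟫ + δ⁻¹ * (∑ i, (1/4) * ((p i)^2 - 1)^2))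
    (u0 u1 w0 w1 : EuclideanSpace ℝ (Fin m))
    (p0 p1 wΓ0 wΓ1 lam : EuclideanSpace ℝ (Fin k))
    (h1 : u1 + (τ * σ) • KΩ ((1/2 : ℝ) • (w0 + w1)) = u0)
    (h2 : ε • KΩ ((1/2 : ℝ) • (u0 + u1)) + ε⁻¹ • DV u0 u1
      - ε • (LinearMap.adjoint B) lam = (1/2 : ℝ) • (w0 + w1))
    (h3 : p1 + τ • KΓ ((1/2 : ℝ) • (wΓ0 + wΓ1)) = p0)
    (h4 : (δ * κ) • KΓ ((1/2 : ℝ) • (p0 + p1)) + δ⁻¹ • DP p0 p1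
      + ε • lam = (1/2 : ℝ) • (wΓ0 + wΓ1))
    (h5 : B u0 = p0) (h6 : B u1 = p1) :
    E u1 p1 ≤ E u0 p0 := by
  set w : EuclideanSpace ℝ (Fin m) := (1/2 : ℝ) • (w0 + w1) with hw
  set wΓ : EuclideanSpace ℝ (Fin k) := (1/2 : ℝ) • (wΓ0 + wΓ1) with hwΓ
  have hu : u1 - u0 = -((τ * σ) • KΩ w) := by rw [← h1]; abel
  have hp : p1 - p0 = -(τ • KΓ wΓ) := by rw [← h3]; abel
  have hadj : ⟪(LinearMap.adjoint B) lam, u1 - u0⟫ = ⟪lam, p1 - p0⟫ := by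
    rw [LinearMap.adjoint_inner_left, map_sub, h5, h6]
  have hq1 := quad_diff KΩ hKΩsym u0 u1
  have hq2 := quad_diff KΓ hKΓsym p0 p1
  have hs1 := quart_diff DV hDV u0 u1
  have hs2 := quart_diff DP hDP p0 p1
  have hEdiff : E u1 p1 - E u0 p0 = ⟪w, u1 - u0⟫ + ⟪wΓ, p1 - p0⟫ := by
    rw [hE, hE, ← h2, ← h4]
    simp only [inner_add_left, inner_sub_left, real_inner_smul_left, hadj]
    linear_combination (ε/2) * hq1 + ε⁻¹ * hs1 + (δ*κ/2) * hq2 + δ⁻¹ * hs2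
  have h7 : ⟪w, u1 - u0⟫ = -((τ * σ) * ⟪KΩ w, w⟫) := by
    rw [hu, inner_neg_right, real_inner_smul_right, real_inner_comm]
  have h8 : ⟪wΓ, p1 - p0⟫ = -(τ * ⟪KΓ wΓ, wΓ⟫) := by
    rw [hp, inner_neg_right, real_inner_smul_right, real_inner_comm]
  have g1 : 0 ≤ (τ * σ) * ⟪KΩ w, w⟫ :=
    mul_nonneg (mul_nonneg hτ.le hσ.le) (hKΩpos w)
  have g2 : 0 ≤ τ * ⟪KΓ wΓ, wΓ⟫ := mul_nonneg hτ.le (hKΓpos wΓ)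
  linarith
end

section
/- Let V, P be finite-dimensional real inner product spaces, K_Ω, K_Γ symmetric positive semidefinite, B : V → P linear, ε, δ, κ, σ, τ > 0, and W₊, W₋, G₊, G₋ convex differentiable potentials. Suppose uⁿ, uⁿ⁺¹, wⁿ⁺¹ ∈ V and pⁿ, pⁿ⁺¹, rⁿ⁺¹, λⁿ⁺¹, μⁿ⁺¹ ∈ P satisfy the Goldstein–Miranville–Schimpera scheme: (i) uⁿ⁺¹ + τσ K_Ω wⁿ⁺¹ − τ B*μⁿ⁺¹ = uⁿ; (ii) ε K_Ω uⁿ⁺¹ + ε⁻¹(∇W₊(uⁿ⁺¹) − ∇W₋(uⁿ)) − ε B*λⁿ⁺¹ = wⁿ⁺¹; (iii) pⁿ⁺¹ + τ K_Γ rⁿ⁺¹ + τ μⁿ⁺¹ = pⁿ; (iv) δκ K_Γ pⁿ⁺¹ + δ⁻¹(∇G₊(pⁿ⁺¹) − ∇G₋(pⁿ)) + ε λⁿ⁺¹ = rⁿ⁺¹; (v) B uⁿ = pⁿ, B uⁿ⁺¹ = pⁿ⁺¹, and B wⁿ⁺¹ = rⁿ⁺¹. Then E(uⁿ⁺¹,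 pⁿ⁺¹) ≤ E(uⁿ, pⁿ) where E(u,p) = (ε/2)⟨K_Ω u,u⟩ + ε⁻¹(W₊(u)−W₋(u)) + (δκ/2)⟨K_Γ p,p⟩ + δ⁻¹(G₊(p)−G₋(p)). -/
/-!
Test the chemical-potential equations (ii) and (iv) with the increments `u¹ - u⁰` and
`p¹ - p⁰`. Convexity of `W₊, G₊` and of the quadratic forms (evaluated implicitly) and of
`W₋, G₋` (evaluated explicitly) bounds the energy increment by the sum of these two pairings.
The multiplier `λ` cancels because `B (u¹ - u⁰) = p¹ - p⁰`, and (i), (iii) with `B w¹ = r¹` turn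
what remains into `-τσ ⟪K_Ω w¹, w¹⟫ - τ ⟪K_Γ r¹, r¹⟫ ≤ 0`.
-/

open scoped RealInnerProductSpace

theorem ConvexOn.hasFDerivAt_apply_sub_le {E : Type*} [NormedAddCommGroup E] [NormedSpace ℝ E]
    {s : Set E} {f : E → ℝ} {f' : StrongDual ℝ E} {x y : E}
    (hf : ConvexOn ℝ s f) (hx : x ∈ s) (hy : y ∈ s) (hf' : HasFDerivAt f f' x) :
    f' (y - x) ≤ f y - f x := by
  have hline : ConvexOn ℝ (AffineMap.lineMap (k := ℝ) x y ⁻¹' s)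
      (f ∘ AffineMap.lineMap (k := ℝ) x y) :=
    hf.comp_affineMap _
  have hderiv : HasDerivAt (f ∘ AffineMap.lineMap (k := ℝ) x y) (f' (y - x)) 0 := by
    refine HasFDerivAt.comp_hasDerivAt (0 : ℝ) ?_ AffineMap.hasDerivAt_lineMap
    simpa using hf'
  simpa [slope] using
    hline.le_slope_of_hasDerivAt (by simpa) (by simpa) one_pos hderiv

section InnerProductSpace

variable {F : Type*} [NormedAddCommGroup F] [InnerProductSpace ℝ F]

theorem ConvexOn.inner_gradient_sub_le [CompleteSpace F] {s : Set F} {f : F → ℝ} {g x y : F}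
    (hf : ConvexOn ℝ s f) (hx : x ∈ s) (hy : y ∈ s) (hg : HasGradientAt f g x) :
    ⟪g, y - x⟫ ≤ f y - f x :=
  hf.hasFDerivAt_apply_sub_le hx hy hg.hasFDerivAt

theorem LinearMap.IsPositive.inner_map_self_sub_le {K : F →ₗ[ℝ] F} (hK : K.IsPositive)
    (a b : F) : ⟪K a, a⟫ - ⟪K b, b⟫ ≤ 2 * ⟪K a, a - b⟫ := by
  have hsymm : ⟪K b, a⟫ = ⟪K a, b⟫ := by rw [hK.isSymmetric b a, real_inner_comm]
  have hdiff : 0 ≤ ⟪K (a - b), a - b⟫ := hK.re_inner_nonneg_left (a - b)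
  simp only [map_sub, inner_sub_left, inner_sub_right] at hdiff ⊢
  linarith

noncomputable def splitEnergy (K : F →ₗ[ℝ] F) (c s : ℝ) (fp fm : F → ℝ) (u : F) : ℝ :=
  c / 2 * ⟪K u, u⟫ + s * (fp u - fm u)

theorem splitEnergy_sub_le [CompleteSpace F] {K : F →ₗ[ℝ] F} {c s : ℝ} {fp fm : F → ℝ}
    {a b gp gm : F} (hK : K.IsPositive) (hc : 0 ≤ c) (hs : 0 ≤ s)
    (hfp : ConvexOn ℝ Set.univ fp) (hfm : ConvexOn ℝ Set.univ fm)
    (hgp : HasGradientAt fp gp a) (hgm : HasGradientAt fm gm b) :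
    splitEnergy K c s fp fm a - splitEnergy K c s fp fm b ≤ ⟪c • K a + s • (gp - gm), a - b⟫ := by
  have hquad : c / 2 * (⟪K a, a⟫ - ⟪K b, b⟫) ≤ c * ⟪K a, a - b⟫ := by
    nlinarith [hK.inner_map_self_sub_le a b]
  have hp : fp a - fp b ≤ ⟪gp, a - b⟫ := by
    have := hfp.inner_gradient_sub_le trivial trivial hgp (y := b)
    rw [← neg_sub a b, inner_neg_right] at this
    linarith
  have hm : ⟪gm, a - b⟫ ≤ fm a - fm b := hfm.inner_gradient_sub_le trivial trivial hgm
  have hpot : s * ((fp a - fp b) - (fm a - fm b)) ≤ s * (⟪gp, a - b⟫ - ⟪gm, a - b⟫) :=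
    mul_le_mul_of_nonneg_left (by linarith) hs
  rw [inner_add_left, real_inner_smul_left, real_inner_smul_left, inner_sub_left]
  unfold splitEnergy
  linarith

end InnerProductSpace

theorem scheme_inner_increment_eq {V P : Type*} [NormedAddCommGroup V] [InnerProductSpace ℝ V]
    [FiniteDimensional ℝ V] [NormedAddCommGroup P] [InnerProductSpace ℝ P]
    [FiniteDimensional ℝ P] {KΩ : V →ₗ[ℝ] V} {KΓ : P →ₗ[ℝ] P} {B : V →ₗ[ℝ] P} {a τ : ℝ}
    {u0 u1 w1 : V} {p0 p1 r1 mu : P} (ε : ℝ) (lam : P)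
    (h1 : u1 + a • KΩ w1 - τ • LinearMap.adjoint B mu = u0)
    (h3 : p1 + τ • KΓ r1 + τ • mu = p0)
    (h5 : B u0 = p0) (h6 : B u1 = p1) (h7 : B w1 = r1) :
    ⟪w1 + ε • LinearMap.adjoint B lam, u1 - u0⟫ + ⟪r1 - ε • lam, p1 - p0⟫
      = -(a * ⟪KΩ w1, w1⟫ + τ * ⟪KΓ r1, r1⟫) := by
  have hu : u1 - u0 = τ • LinearMap.adjoint B mu - a • KΩ w1 := by rw [← h1]; abel
  have hp : p1 - p0 = -(τ • KΓ r1 + τ • mu) := by rw [← h3]; abel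
  have hBu : B (u1 - u0) = p1 - p0 := by rw [map_sub, h5, h6]
  have hlam : ⟪LinearMap.adjoint B lam, u1 - u0⟫ = ⟪lam, p1 - p0⟫ := by
    rw [LinearMap.adjoint_inner_left, hBu]
  have hw : ⟪w1, u1 - u0⟫ = τ * ⟪r1, mu⟫ - a * ⟪KΩ w1, w1⟫ := by
    rw [hu, inner_sub_right, real_inner_smul_right, real_inner_smul_right,
      LinearMap.adjoint_inner_right, h7, real_inner_comm w1]
  have hr : ⟪r1, p1 - p0⟫ = -(τ * ⟪KΓ r1, r1⟫ + τ * ⟪r1, mu⟫) := by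
    rw [hp, inner_neg_right, inner_add_right, real_inner_smul_right, real_inner_smul_right,
      real_inner_comm r1]
  rw [inner_add_left, inner_sub_left, real_inner_smul_left, real_inner_smul_left, hlam, hw, hr]
  ring

theorem stmt_15 {V P : Type*} [NormedAddCommGroup V] [InnerProductSpace ℝ V]
    [FiniteDimensional ℝ V] [NormedAddCommGroup P] [InnerProductSpace ℝ P]
    [FiniteDimensional ℝ P]
    (KΩ : V →ₗ[ℝ] V) (KΓ : P →ₗ[ℝ] P) (B : V →ₗ[ℝ] P)
    (hKΩsym : ∀ x y : V, ⟪KΩ x, y⟫ = ⟪x, KΩ y⟫)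
    (hKΩpos : ∀ v : V, 0 ≤ ⟪KΩ v, v⟫)
    (hKΓsym : ∀ x y : P, ⟪KΓ x, y⟫ = ⟪x, KΓ y⟫)
    (hKΓpos : ∀ q : P, 0 ≤ ⟪KΓ q, q⟫)
    (ε δ κ σ τ : ℝ) (hε : 0 < ε) (hδ : 0 < δ) (hκ : 0 < κ) (hσ : 0 < σ) (hτ : 0 < τ)
    (Wp Wm : V → ℝ) (gWp gWm : V → V)
    (Gp Gm : P → ℝ) (gGp gGm : P → P)
    (hWpconv : ConvexOn ℝ Set.univ Wp) (hWmconv : ConvexOn ℝ Set.univ Wm)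
    (hGpconv : ConvexOn ℝ Set.univ Gp) (hGmconv : ConvexOn ℝ Set.univ Gm)
    (hWp : ∀ x, HasGradientAt Wp (gWp x) x)
    (hWm : ∀ x, HasGradientAt Wm (gWm x) x)
    (hGp : ∀ x, HasGradientAt Gp (gGp x) x)
    (hGm : ∀ x, HasGradientAt Gm (gGm x) x)
    (E : V → P → ℝ)
    (hE : ∀ u p, E u p = (ε/2) * ⟪KΩ u, u⟫ + ε⁻¹ * (Wp u - Wm u)
      + (δ * κ / 2) * ⟪KΓ p, p⟫ + δ⁻¹ * (Gp p - Gm p))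
    (u0 u1 w1 : V) (p0 p1 r1 lam mu : P)
    (h1 : u1 + (τ * σ) • KΩ w1 - τ • (LinearMap.adjoint B) mu = u0)
    (h2 : ε • KΩ u1 + ε⁻¹ • (gWp u1 - gWm u0) - ε • (LinearMap.adjoint B) lam = w1)
    (h3 : p1 + τ • KΓ r1 + τ • mu = p0)
    (h4 : (δ * κ) • KΓ p1 + δ⁻¹ • (gGp p1 - gGm p0) + ε • lam = r1)
    (h5 : B u0 = p0) (h6 : B u1 = p1) (h7 : B w1 = r1) :
    E u1 p1 ≤ E u0 p0 := by
  have hbulk := splitEnergy_sub_le ⟨hKΩsym, hKΩpos⟩ hε.le (inv_nonneg.2 hε.le)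
    hWpconv hWmconv (hWp u1) (hWm u0)
  have hsurf := splitEnergy_sub_le ⟨hKΓsym, hKΓpos⟩ (mul_pos hδ hκ).le (inv_nonneg.2 hδ.le)
    hGpconv hGmconv (hGp p1) (hGm p0)
  rw [show ε • KΩ u1 + ε⁻¹ • (gWp u1 - gWm u0) = w1 + ε • LinearMap.adjoint B lam by
    rw [← h2]; abel] at hbulk
  rw [show (δ * κ) • KΓ p1 + δ⁻¹ • (gGp p1 - gGm p0) = r1 - ε • lam by
    rw [← h4]; abel] at hsurf
  have hincr := scheme_inner_increment_eq ε lam h1 h3 h5 h6 h7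
  have hdiss : 0 ≤ τ * σ * ⟪KΩ w1, w1⟫ + τ * ⟪KΓ r1, r1⟫ := by
    have := hKΩpos w1; have := hKΓpos r1; positivity
  rw [hE, hE]
  unfold splitEnergy at hbulk hsurf
  linarith
end

section
/- Let f₊, f₋ : ℝ → ℝ be convex and differentiable, and set f = f₊ − f₋. Then for all x, y ∈ ℝ: (f₊'(y) − f₋'(x))·(y − x) ≥ f(y) − f(x). -/
lemma tangent_le (g g' : ℝ → ℝ) (hc : ConvexOn ℝ Set.univ g)
    (hd : ∀ x, HasDerivAt g (g' x) x) (a b : ℝ) :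
    g' a * (b - a) ≤ g b - g a := by
  rcases lt_trichotomy a b with h | h | h
  · have := hc.le_slope_of_hasDerivAt (Set.mem_univ a) (Set.mem_univ b) h (hd a)
    rw [slope_def_field, le_div_iff₀ (by linarith)] at this
    linarith
  · simp [h]
  · have := hc.slope_le_of_hasDerivAt (Set.mem_univ b) (Set.mem_univ a) h (hd a)
    have hb : b - a < 0 := by linarith
    rw [slope_def_field] at this
    have : (g a - g b) / (a - b) ≤ g' a := this
    rw [div_le_iff₀ (by linarith)] at this
    nlinarith

theorem stmt_17 (fp fm fp' fm' : ℝ → ℝ)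
    (hfpconv : ConvexOn ℝ Set.univ fp) (hfmconv : ConvexOn ℝ Set.univ fm)
    (hfp : ∀ x, HasDerivAt fp (fp' x) x)
    (hfm : ∀ x, HasDerivAt fm (fm' x) x)
    (f : ℝ → ℝ) (hf : f = fp - fm) :
    ∀ x y : ℝ, (fp' y - fm' x) * (y - x) ≥ f y - f x := by
  intro x y
  have h1 := tangent_le fp fp' hfpconv hfp y x
  have h2 := tangent_le fm fm' hfmconv hfm x y
  simp only [hf, Pi.sub_apply]
  nlinarith
end

section
/- Let V be a finite-dimensional real inner product space, K : V → V symmetric positive semidefinite, and ε, σ, τ > 0. Suppose (uⁿ)ₙ in V and (wⁿ⁺¹)ₙ satisfy uⁿ⁺¹ + τσ K wⁿ⁺¹ = uⁿ and ε K uⁿ⁺¹ + ε⁻¹(∇W₊(uⁿ⁺¹) − ∇W₋(uⁿ)) = wⁿ⁺¹ for all n ≥ 0, with W₊, W₋ convex differentiable. Then the sequence of energies E(uⁿ) = (ε/2)⟨K uⁿ, uⁿ⟩ + ε⁻¹(W₊(uⁿ) − W₋(uⁿ)) is monotonically nonincreasing, and moreover E(u⁰) − E(u^N) ≥ τσ Σ_{n=0}^{N−1}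 ⟨K wⁿ⁺¹, wⁿ⁺¹⟩ for every N ≥ 1. -/
/-!
With `d = uⁿ - uⁿ⁺¹ = τσ K wⁿ⁺¹`, testing the chemical-potential equation against `d` gives
`τσ ⟪K wⁿ⁺¹, wⁿ⁺¹⟫ = ε ⟪K uⁿ⁺¹, d⟫ + ε⁻¹ ⟪∇W₊(uⁿ⁺¹) - ∇W₋(uⁿ), d⟫`.
Expanding the quadratic energy around `uⁿ⁺¹` and using the first-order convexity inequality
for `W₊` at `uⁿ⁺¹` and for `W₋` at `uⁿ` (the convex part is implicit, the concave part
explicit) bounds the right-hand side by `E(uⁿ) - E(uⁿ⁺¹)`, the slack being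
`(ε/2) ⟪K d, d⟫ ≥ 0` plus two Bregman distances. Summing over `n` telescopes.
-/

open scoped RealInnerProductSpace

theorem ConvexOn.add_inner_gradient_sub_le {V : Type*} [NormedAddCommGroup V]
    [InnerProductSpace ℝ V] [CompleteSpace V] {s : Set V} {f : V → ℝ} {g x y : V}
    (hf : ConvexOn ℝ s f) (hx : x ∈ s) (hy : y ∈ s) (hg : HasGradientAt f g x) :
    f x + ⟪g, y - x⟫ ≤ f y := by
  simpa using hf.add_fderiv_sub_le hx hy hg.hasFDerivAt

section ConvexSplitting

variable {V : Type*} [NormedAddCommGroup V] [InnerProductSpace ℝ V]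

theorem LinearMap.IsSymmetric.inner_map_add_add {K : V →ₗ[ℝ] V} (hK : K.IsSymmetric)
    (a d : V) : ⟪K (a + d), a + d⟫ = ⟪K a, a⟫ + 2 * ⟪K a, d⟫ + ⟪K d, d⟫ := by
  rw [map_add, inner_add_left, inner_add_right, inner_add_right, hK d a, real_inner_comm d (K a)]
  ring

noncomputable def splittingEnergy (K : V →ₗ[ℝ] V) (Wp Wm : V → ℝ) (ε : ℝ) (v : V) : ℝ :=
  ε / 2 * ⟪K v, v⟫ + ε⁻¹ * (Wp v - Wm v)

variable [CompleteSpace V] {K : V →ₗ[ℝ] V} {Wp Wm : V → ℝ} {gWp gWm : V → V} {ε : ℝ}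

/-- One step `b ↦ a` of the scheme, with time step `h` and chemical potential `w`. -/
theorem mul_inner_le_splittingEnergy_sub (hK : K.IsSymmetric) (hKpos : ∀ v, 0 ≤ ⟪K v, v⟫)
    (hWpconv : ConvexOn ℝ Set.univ Wp) (hWmconv : ConvexOn ℝ Set.univ Wm)
    (hWp : ∀ x, HasGradientAt Wp (gWp x) x) (hWm : ∀ x, HasGradientAt Wm (gWm x) x)
    (hε : 0 < ε) {h : ℝ} {a b w : V} (hstep : a + h • K w = b)
    (hw : ε • K a + ε⁻¹ • (gWp a - gWm b) = w) :
    h * ⟪K w, w⟫ ≤ splittingEnergy K Wp Wm ε b - splittingEnergy K Wp Wm ε a := by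
  set d := h • K w
  have hba : b - a = d := by rw [← hstep, add_sub_cancel_left]
  have hab : a - b = -d := by rw [← hba, neg_sub]
  have hwd : h * ⟪K w, w⟫ = ⟪w, d⟫ := by rw [real_inner_smul_right, real_inner_comm]
  have hwd' : ⟪w, d⟫ = ε * ⟪K a, d⟫ + ε⁻¹ * (⟪gWp a, d⟫ - ⟪gWm b, d⟫) := by
    rw [← hw, inner_add_left, real_inner_smul_left, real_inner_smul_left, inner_sub_left]
  have hWpb : Wp a + ⟪gWp a, d⟫ ≤ Wp b := by
    simpa [hba] using hWpconv.add_inner_gradient_sub_le trivial trivial (y := b) (hWp a)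
  have hWma : Wm b - ⟪gWm b, d⟫ ≤ Wm a := by
    simpa [hab, sub_eq_add_neg] using
      hWmconv.add_inner_gradient_sub_le trivial trivial (y := a) (hWm b)
  have hbregman : ε⁻¹ * (⟪gWp a, d⟫ - ⟪gWm b, d⟫) ≤ ε⁻¹ * ((Wp b - Wm b) - (Wp a - Wm a)) :=
    mul_le_mul_of_nonneg_left (by linarith) (inv_nonneg.mpr hε.le)
  have hquad : ⟪K b, b⟫ = ⟪K a, a⟫ + 2 * ⟪K a, d⟫ + ⟪K d, d⟫ := by
    rw [← hstep, hK.inner_map_add_add]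
  have hslack : 0 ≤ ε / 2 * ⟪K d, d⟫ := mul_nonneg (by positivity) (hKpos d)
  simp only [splittingEnergy, hquad]
  linarith

end ConvexSplitting

theorem stmt_18 {V : Type*} [NormedAddCommGroup V] [InnerProductSpace ℝ V]
    [FiniteDimensional ℝ V]
    (K : V →ₗ[ℝ] V)
    (hKsym : ∀ x y : V, ⟪K x, y⟫ = ⟪x, K y⟫)
    (hKpos : ∀ v : V, 0 ≤ ⟪K v, v⟫)
    (Wp Wm : V → ℝ) (gWp gWm : V → V)
    (hWpconv : ConvexOn ℝ Set.univ Wp) (hWmconv : ConvexOn ℝ Set.univ Wm)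
    (hWp : ∀ x, HasGradientAt Wp (gWp x) x)
    (hWm : ∀ x, HasGradientAt Wm (gWm x) x)
    (ε σ τ : ℝ) (hε : 0 < ε) (hσ : 0 < σ) (hτ : 0 < τ)
    (u w : ℕ → V)
    (h1 : ∀ n, u (n+1) + (τ * σ) • K (w (n+1)) = u n)
    (h2 : ∀ n, ε • K (u (n+1)) + ε⁻¹ • (gWp (u (n+1)) - gWm (u n)) = w (n+1))
    (E : V → ℝ)
    (hE : ∀ v, E v = (ε/2) * ⟪K v, v⟫ + ε⁻¹ * (Wp v - Wm v)) :
    (∀ n, E (u (n+1)) ≤ E (u n)) ∧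
    (∀ N : ℕ, 1 ≤ N →
      E (u 0) - E (u N) ≥ τ * σ * ∑ n ∈ Finset.range N, ⟪K (w (n+1)), w (n+1)⟫) := by
  obtain rfl : E = splittingEnergy K Wp Wm ε := funext hE
  have hstep (n : ℕ) :
      τ * σ * ⟪K (w (n+1)), w (n+1)⟫ ≤ splittingEnergy K Wp Wm ε (u n) -
        splittingEnergy K Wp Wm ε (u (n+1)) :=
    mul_inner_le_splittingEnergy_sub hKsym hKpos hWpconv hWmconv hWp hWm hε (h1 n) (h2 n)
  refine ⟨fun n => ?_, fun N _ => ?_⟩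
  · have := mul_nonneg (mul_nonneg hτ.le hσ.le) (hKpos (w (n+1)))
    linarith [hstep n]
  · rw [ge_iff_le, Finset.mul_sum,
      ← Finset.sum_range_sub' (fun n => splittingEnergy K Wp Wm ε (u n))]
    exact Finset.sum_le_sum fun n _ => hstep n
end
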